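/- arXiv:1507.00569 — 7 statements merged into one kernel-verified Lean document; each statement's English description precedes it below -/
import Mathlib

section
/- For every integer k ≥ 2, the set {k-1, k+1, 4k, 16k^3 - 4k} is an integer Diophantine quadruple; that is, its elements are distinct positive integers and the product of any two distinct elements increased by 1 is a perfect square of an integer. -/
theorem integer_diophantine_quadruple (k : ℤ) (hk : 2 ≤ k) :
    (∀ a ∈ ({k - 1, k + 1, 4 * k, 16 * k ^ 3 - 4 * k} : Set ℤ), 0 < a) ∧
    (k - 1 ≠ k + 1 ∧ k - 1 ≠ 4 * k ∧ k - 1 ≠ 16 * k ^ 3 - 4 * k ∧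
      k + 1 ≠ 4 * k ∧ k + 1 ≠ 16 * k ^ 3 - 4 * k ∧ 4 * k ≠ 16 * k ^ 3 - 4 * k) ∧
    (∀ a ∈ ({k - 1, k + 1, 4 * k, 16 * k ^ 3 - 4 * k} : Set ℤ),
      ∀ b ∈ ({k - 1, k + 1, 4 * k, 16 * k ^ 3 - 4 * k} : Set ℤ),
        a ≠ b → ∃ m : ℤ, a * b + 1 = m ^ 2) := by
  have hbig : 64 * k ≤ 16 * k ^ 3 := by
    nlinarith [mul_le_mul_of_nonneg_left (show (4:ℤ) ≤ k ^ 2 by nlinarith)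
      (show (0:ℤ) ≤ 16 * k by linarith)]
  refine ⟨?_, ⟨by intro h; omega, by intro h; omega, by intro h; linarith,
    by intro h; linarith, by intro h; linarith, by intro h; linarith⟩, ?_⟩
  · rintro a (rfl | rfl | rfl | rfl) <;> linarith
  · rintro a (rfl | rfl | rfl | rfl) b (rfl | rfl | rfl | rfl) hab
    · exact absurd rfl hab
    · exact ⟨k, by ring⟩
    · exact ⟨2 * k - 1, by ring⟩
    · exact ⟨4 * k ^ 2 - 2 * k - 1, by ring⟩
    · exact ⟨k, by ring⟩
    · exact absurd rfl hab
    · exact ⟨2 * k + 1, by ring⟩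
    · exact ⟨4 * k ^ 2 + 2 * k - 1, by ring⟩
    · exact ⟨2 * k - 1, by ring⟩
    · exact ⟨2 * k + 1, by ring⟩
    · exact absurd rfl hab
    · exact ⟨8 * k ^ 2 - 1, by ring⟩
    · exact ⟨4 * k ^ 2 - 2 * k - 1, by ring⟩
    · exact ⟨4 * k ^ 2 + 2 * k - 1, by ring⟩
    · exact ⟨8 * k ^ 2 - 1, by ring⟩
    · exact absurd rfl hab
end

section
/- Let f be a monic cubic polynomial with rational coefficients and let Q = (x1, y1), T = (x2, y2), U = (x3, y3) be three points in the affine plane over ℚ satisfying y_i^2 = f(x_i) for each i and lying on a common line (i.e., collinear). Suppose α ∈ ℚ satisfies α^2 = f(0). Then x1·x2·x3 + α^2 is the square of a rational number. -/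
theorem collinear_points_square (f : Polynomial ℚ) (hf : f.Monic)
    (hdeg : f.natDegree = 3)
    (x1 y1 x2 y2 x3 y3 α : ℚ)
    (h1 : y1 ^ 2 = f.eval x1) (h2 : y2 ^ 2 = f.eval x2) (h3 : y3 ^ 2 = f.eval x3)
    (hdist : (x1, y1) ≠ (x2, y2) ∧ (x1, y1) ≠ (x3, y3) ∧ (x2, y2) ≠ (x3, y3))
    (hline : ∃ β γ : ℚ, y1 = β * x1 + γ ∧ y2 = β * x2 + γ ∧ y3 = β * x3 + γ)
    (hα : α ^ 2 = f.eval 0) :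
    ∃ q : ℚ, x1 * x2 * x3 + α ^ 2 = q ^ 2 := by
  obtain ⟨β, γ, hl1, hl2, hl3⟩ := hline
  obtain ⟨hd12, hd13, hd23⟩ := hdist
  have hx12 : x1 ≠ x2 := by
    intro h; apply hd12; rw [Prod.mk.injEq]; exact ⟨h, by rw [hl1, hl2, h]⟩
  have hx13 : x1 ≠ x3 := by
    intro h; apply hd13; rw [Prod.mk.injEq]; exact ⟨h, by rw [hl1, hl3, h]⟩
  have hx23 : x2 ≠ x3 := by
    intro h; apply hd23; rw [Prod.mk.injEq]; exact ⟨h, by rw [hl2, hl3, h]⟩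
  have hc3 : f.coeff 3 = 1 := by
    have := hf.coeff_natDegree; rwa [hdeg] at this
  have heval : ∀ x : ℚ,
      f.eval x = f.coeff 0 + f.coeff 1 * x + f.coeff 2 * x ^ 2 + x ^ 3 := by
    intro x
    rw [Polynomial.eval_eq_sum_range, hdeg]
    simp [Finset.sum_range_succ, hc3]; try ring
  rw [heval] at h1 h2 h3
  rw [hα, heval]
  refine ⟨γ, ?_⟩
  have e1 : (β * x1 + γ) ^ 2
      = f.coeff 0 + f.coeff 1 * x1 + f.coeff 2 * x1 ^ 2 + x1 ^ 3 := by
    rw [← h1, hl1]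
  have e2 : (β * x2 + γ) ^ 2
      = f.coeff 0 + f.coeff 1 * x2 + f.coeff 2 * x2 ^ 2 + x2 ^ 3 := by
    rw [← h2, hl2]
  have e3 : (β * x3 + γ) ^ 2
      = f.coeff 0 + f.coeff 1 * x3 + f.coeff 2 * x3 ^ 2 + x3 ^ 3 := by
    rw [← h3, hl3]
  have d12 : x1 - x2 ≠ 0 := sub_ne_zero_of_ne hx12
  have d13 : x1 - x3 ≠ 0 := sub_ne_zero_of_ne hx13
  have d23 : x2 - x3 ≠ 0 := sub_ne_zero_of_ne hx23
  have key : (x1 - x2) * (x1 - x3) * (x2 - x3)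
      * (x1 * x2 * x3 + (f.coeff 0 + f.coeff 1 * 0 + f.coeff 2 * 0 ^ 2 + 0 ^ 3) - γ ^ 2) = 0 := by
    linear_combination (x1 * x3 * (x1 - x3)) * e2
      - (x2 * x3 * (x2 - x3)) * e1 - (x1 * x2 * (x1 - x2)) * e3
  have hD : (x1 - x2) * (x1 - x3) * (x2 - x3) ≠ 0 := by
    exact mul_ne_zero (mul_ne_zero d12 d13) d23
  have := (mul_eq_zero.mp key).resolve_left hD
  linarith
end

section
/- Let a, b, c be nonzero rationals with σ1 = a+b+c, σ3 = abc, and suppose ab + ac + bc = (σ1^2·σ3^2 - 12σ3^2 - 6σ1σ3 - 3)/(4 + 4σ3^2). Then (ab+1)(ac+1)(bc+1) = (2σ3^2 + σ1σ3 - 1)^2/(4 + 4σ3^2). In particular, if 1 + σ3^2 is a square of a rational, then (ab+1)(ac+1)(bc+1) is a square of a rational. -/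
theorem product_square_identity (a b c : ℚ) (ha : a ≠ 0) (hb : b ≠ 0) (hc : c ≠ 0)
    (h : a*b + a*c + b*c =
      ((a+b+c)^2 * (a*b*c)^2 - 12*(a*b*c)^2 - 6*(a+b+c)*(a*b*c) - 3)
        / (4 + 4*(a*b*c)^2)) :
    (a*b + 1) * (a*c + 1) * (b*c + 1)
      = (2*(a*b*c)^2 + (a+b+c)*(a*b*c) - 1) ^ 2 / (4 + 4*(a*b*c)^2) ∧
    ((∃ q : ℚ, 1 + (a*b*c)^2 = q ^ 2) →
      ∃ q : ℚ, (a*b + 1) * (a*c + 1) * (b*c + 1) = q ^ 2) := by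
  have hden : (4 + 4*(a*b*c)^2) ≠ 0 := by positivity
  rw [eq_div_iff hden] at h
  have key : (a*b + 1) * (a*c + 1) * (b*c + 1)
      = (2*(a*b*c)^2 + (a+b+c)*(a*b*c) - 1) ^ 2 / (4 + 4*(a*b*c)^2) := by
    rw [eq_div_iff hden]
    linear_combination h
  refine ⟨key, fun ⟨q, hq⟩ => ?_⟩
  have hq0 : q ≠ 0 := by
    intro h0; rw [h0] at hq; simp at hq; nlinarith [sq_nonneg (a*b*c)]
  refine ⟨(2*(a*b*c)^2 + (a+b+c)*(a*b*c) - 1) / (2*q), ?_⟩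
  rw [key, div_pow]
  congr 1
  rw [mul_pow]
  nlinarith [hq]
end

section
/- For every rational t with t ∉ {-1, 0, 1}, the rationals a = 18t(t-1)(t+1)/((t^2-6t+1)(t^2+6t+1)), b = (t-1)(t^2+6t+1)^2/(6t(t+1)(t^2-6t+1)), c = (t+1)(t^2-6t+1)^2/(6t(t-1)(t^2+6t+1)) satisfy: ab+1, ac+1, and bc+1 are each squares of rational numbers, provided the denominators are nonzero (i.e., t^2-6t+1 ≠ 0 and t^2+6t+1 ≠ 0, which holds automatically for rational t). -/
/-!
Each of `ab + 1`, `ac + 1`, `bc + 1` is, after clearing denominators, the square of an explicit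
rational function of `t`. The denominators `t² ∓ 6t + 1 = (t ∓ 3)² - 8` never vanish on `ℚ`,
since `8` is not a rational square.
-/

theorem Rat.sq_sub_six_mul_add_one_ne_zero (t : ℚ) : t ^ 2 - 6 * t + 1 ≠ 0 := by
  intro h
  have h8 : ¬IsSquare (8 : ℚ) := by norm_num
  exact h8 ⟨t - 3, by linear_combination -h⟩

theorem Rat.sq_add_six_mul_add_one_ne_zero (t : ℚ) : t ^ 2 + 6 * t + 1 ≠ 0 := by
  simpa using sq_sub_six_mul_add_one_ne_zero (-t)

namespace DiophantineTriple

variable {K : Type*} [Field K] [CharZero K] {t : K}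

def a (t : K) : K := 18 * t * (t - 1) * (t + 1) / ((t ^ 2 - 6 * t + 1) * (t ^ 2 + 6 * t + 1))

def b (t : K) : K := (t - 1) * (t ^ 2 + 6 * t + 1) ^ 2 / (6 * t * (t + 1) * (t ^ 2 - 6 * t + 1))

def c (t : K) : K := (t + 1) * (t ^ 2 - 6 * t + 1) ^ 2 / (6 * t * (t - 1) * (t ^ 2 + 6 * t + 1))

theorem a_mul_b_add_one (ht : t ≠ 0) (htp : t + 1 ≠ 0) (h1 : t ^ 2 - 6 * t + 1 ≠ 0)
    (h2 : t ^ 2 + 6 * t + 1 ≠ 0) :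
    a t * b t + 1 = (2 * (t ^ 2 + 1) / (t ^ 2 - 6 * t + 1)) ^ 2 := by
  rw [a, b, div_mul_div_comm, div_add_one (by simp [*]), div_pow,
    div_eq_div_iff (by simp [*]) (by simp [*])]
  ring

theorem a_mul_c_add_one (ht : t ≠ 0) (htm : t - 1 ≠ 0) (h1 : t ^ 2 - 6 * t + 1 ≠ 0)
    (h2 : t ^ 2 + 6 * t + 1 ≠ 0) :
    a t * c t + 1 = (2 * (t ^ 2 + 1) / (t ^ 2 + 6 * t + 1)) ^ 2 := by
  rw [a, c, div_mul_div_comm, div_add_one (by simp [*]), div_pow,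
    div_eq_div_iff (by simp [*]) (by simp [*])]
  ring

theorem b_mul_c_add_one (ht : t ≠ 0) (htm : t - 1 ≠ 0) (htp : t + 1 ≠ 0)
    (h1 : t ^ 2 - 6 * t + 1 ≠ 0) (h2 : t ^ 2 + 6 * t + 1 ≠ 0) :
    b t * c t + 1 = ((t ^ 2 + 1) / (6 * t)) ^ 2 := by
  rw [b, c, div_mul_div_comm, div_add_one (by simp [*]), div_pow,
    div_eq_div_iff (by simp [*]) (by simp [*])]
  ring

end DiophantineTriple

open DiophantineTriple in
theorem parametric_triple_is_diophantine_general (t : ℚ)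
    (ht : t ≠ -1 ∧ t ≠ 0 ∧ t ≠ 1) :
    (∃ q : ℚ, (18*t*(t-1)*(t+1) / ((t^2-6*t+1)*(t^2+6*t+1)))
        * ((t-1)*(t^2+6*t+1)^2 / (6*t*(t+1)*(t^2-6*t+1))) + 1 = q ^ 2) ∧
    (∃ q : ℚ, (18*t*(t-1)*(t+1) / ((t^2-6*t+1)*(t^2+6*t+1)))
        * ((t+1)*(t^2-6*t+1)^2 / (6*t*(t-1)*(t^2+6*t+1))) + 1 = q ^ 2) ∧
    (∃ q : ℚ, ((t-1)*(t^2+6*t+1)^2 / (6*t*(t+1)*(t^2-6*t+1)))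
        * ((t+1)*(t^2-6*t+1)^2 / (6*t*(t-1)*(t^2+6*t+1))) + 1 = q ^ 2) := by
  obtain ⟨ht_neg_one, ht0, ht_one⟩ := ht
  have hm : t - 1 ≠ 0 := sub_ne_zero.mpr ht_one
  have hp : t + 1 ≠ 0 := by rwa [← sub_neg_eq_add, sub_ne_zero]
  have h1 := Rat.sq_sub_six_mul_add_one_ne_zero t
  have h2 := Rat.sq_add_six_mul_add_one_ne_zero t
  exact ⟨⟨_, a_mul_b_add_one ht0 hp h1 h2⟩, ⟨_, a_mul_c_add_one ht0 hm h1 h2⟩,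
    ⟨_, b_mul_c_add_one ht0 hm hp h1 h2⟩⟩

theorem parametric_triple_is_diophantine (t : ℚ)
    (ht : t ≠ -1 ∧ t ≠ 0 ∧ t ≠ 1)
    (h1 : t^2 - 6*t + 1 ≠ 0) (h2 : t^2 + 6*t + 1 ≠ 0) :
    (∃ q : ℚ, (18*t*(t-1)*(t+1) / ((t^2-6*t+1)*(t^2+6*t+1)))
        * ((t-1)*(t^2+6*t+1)^2 / (6*t*(t+1)*(t^2-6*t+1))) + 1 = q ^ 2) ∧
    (∃ q : ℚ, (18*t*(t-1)*(t+1) / ((t^2-6*t+1)*(t^2+6*t+1)))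
        * ((t+1)*(t^2-6*t+1)^2 / (6*t*(t-1)*(t^2+6*t+1))) + 1 = q ^ 2) ∧
    (∃ q : ℚ, ((t-1)*(t^2+6*t+1)^2 / (6*t*(t+1)*(t^2-6*t+1)))
        * ((t+1)*(t^2-6*t+1)^2 / (6*t*(t-1)*(t^2+6*t+1))) + 1 = q ^ 2) :=
  parametric_triple_is_diophantine_general t ht
end

section
/- The set {36534805866201747/2323780774755404, 1065197767305747/13609226201091404, 3802080647508196/6238332600753747} is a rational Diophantine triple with all elements positive. -/
theorem positive_rational_triple :
    (∀ a ∈ ({36534805866201747/2323780774755404, 1065197767305747/13609226201091404,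
        3802080647508196/6238332600753747} : Set ℚ), 0 < a) ∧
    (∀ a ∈ ({36534805866201747/2323780774755404, 1065197767305747/13609226201091404,
        3802080647508196/6238332600753747} : Set ℚ),
      ∀ b ∈ ({36534805866201747/2323780774755404, 1065197767305747/13609226201091404,
        3802080647508196/6238332600753747} : Set ℚ),
        a ≠ b → ∃ q : ℚ, a * b + 1 = q ^ 2) := by
  constructor
  · rintro a ha
    simp only [Set.mem_insert_iff, Set.mem_singleton_iff] at ha
    rcases ha with rfl|rfl|rfl <;> norm_num
  · rintro a ha b hb hab
    simp only [Set.mem_insert_iff, Set.mem_singleton_iff] at ha hb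
    rcases ha with rfl|rfl|rfl <;> rcases hb with rfl|rfl|rfl
    · exact absurd rfl hab
    · exact ⟨184182845/123322028, by norm_num⟩
    · exact ⟨61297410/18843193, by norm_num⟩
    · exact ⟨184182845/123322028, by norm_num⟩
    · exact absurd rfl hab
    · exact ⟨112956690/110355193, by norm_num⟩
    · exact ⟨61297410/18843193, by norm_num⟩
    · exact ⟨112956690/110355193, by norm_num⟩
    · exact absurd rfl hab
end

section
/- Let t ≠ 1 be a positive integer and p an odd prime with p exactly dividing t^2 + 1 (i.e., p | t^2+1 but p^2 ∤ t^2+1). Then p does not divide 3, and the rational number x([2]R) = -(3/4)(t^2-6t+1)(t^2+6t+1) has p-adic valuation equal to 0. -/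
lemma zmod3_aux : ∀ x : ZMod 3, x^2 + 1 ≠ 0 := by decide


theorem valuation_x2R (t : ℕ) (ht : 0 < t) (ht1 : t ≠ 1)
    (p : ℕ) (hp : p.Prime) (hodd : Odd p)
    (hdvd : (p : ℤ) ∣ (t : ℤ)^2 + 1) (hndvd : ¬ ((p : ℤ)^2 ∣ (t : ℤ)^2 + 1)) :
    p ≠ 3 ∧
    padicValRat p (-(3/4) * ((t : ℚ)^2 - 6*(t : ℚ) + 1) * ((t : ℚ)^2 + 6*(t : ℚ) + 1)) = 0 := by
  haveI : Fact p.Prime := ⟨hp⟩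
  have hp2 : p ≠ 2 := by
    rintro rfl
    exact (Nat.not_odd_iff_even.mpr even_two) hodd
  have hp3 : p ≠ 3 := by
    rintro rfl
    have h0 : (((t:ℤ)^2 + 1 : ℤ) : ZMod 3) = 0 :=
      (ZMod.intCast_zmod_eq_zero_iff_dvd _ 3).mpr hdvd
    push_cast at h0
    exact zmod3_aux _ h0
  refine ⟨hp3, ?_⟩
  set n : ℤ := -3 * ((t : ℤ)^2 - 6*t + 1) * ((t : ℤ)^2 + 6*t + 1) with hn
  have hpt : ¬ (p : ℤ) ∣ (t : ℤ) := by
    intro h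
    obtain ⟨a, ha⟩ := h
    obtain ⟨b, hb⟩ := hdvd
    have hp1 : (p : ℤ) ∣ 1 := ⟨b - p * a^2, by nlinarith⟩
    have := Int.le_of_dvd one_pos hp1
    have := hp.two_le
    omega
  have hpn : ¬ (p : ℤ) ∣ n := by
    intro h
    have hAB : (p : ℤ) ∣ ((t:ℤ)^2 - 6*t + 1) * ((t:ℤ)^2 + 6*t + 1) := by
      rcases (Int.Prime.dvd_mul' hp h) with h' | h'
      · rcases (Int.Prime.dvd_mul' hp h') with h'' | h''
        · exfalso
          have h3z : (p:ℤ) ∣ (3:ℤ) := by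
            rcases h'' with ⟨c, hc⟩
            exact ⟨-c, by linarith⟩
          have h3 : p ∣ 3 := by exact_mod_cast h3z
          rcases (Nat.Prime.eq_one_or_self_of_dvd Nat.prime_three p h3) with h | h
          · exact hp.one_lt.ne' h
          · exact hp3 h
        · exact h''.mul_right _
      · exact h'.mul_left _
    have h36 : (p : ℤ) ∣ 36 * (t:ℤ)^2 := by
      have h1 : (p : ℤ) ∣ ((t:ℤ)^2+1) * ((t:ℤ)^2+1) := hdvd.mul_left _
      obtain ⟨a, ha⟩ := h1
      obtain ⟨b, hb⟩ := hAB
      exact ⟨a - b, by nlinarith⟩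
    rcases Int.Prime.dvd_mul' hp h36 with h' | h'
    · have hnat : p ∣ 36 := by exact_mod_cast h'
      have hge := hp.two_le
      have hle : p ≤ 36 := Nat.le_of_dvd (by norm_num) hnat
      interval_cases p
      all_goals first
        | exact hp2 rfl
        | exact hp3 rfl
        | exact absurd hp (by decide)
        | exact absurd hnat (by decide)
    · rcases Int.Prime.dvd_mul' hp (by rwa [sq] at h') with h'' | h'' <;> exact hpt h''
  have hA : (t : ℤ)^2 - 6*t + 1 ≠ 0 := by
    intro h
    have h8 : ((t:ℤ) - 3)^2 = 8 := by linear_combination h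
    have hub : t ≤ 6 := by
      by_contra hc
      have : (7:ℤ) ≤ t := by exact_mod_cast Nat.lt_of_not_le hc
      nlinarith
    interval_cases t <;> norm_num at h
  have hB : (t : ℤ)^2 + 6*t + 1 ≠ 0 := by positivity
  have hn0 : n ≠ 0 := by
    simp only [hn, mul_ne_zero_iff]
    exact ⟨⟨by norm_num, hA⟩, hB⟩
  have heq : -(3/4 : ℚ) * ((t : ℚ)^2 - 6*(t : ℚ) + 1) * ((t : ℚ)^2 + 6*(t : ℚ) + 1)
      = (n : ℚ) / 4 := by
    rw [hn]; push_cast; ring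
  rw [heq, padicValRat.div (q := (n:ℚ)) (by exact_mod_cast hn0) (by norm_num)]
  rw [padicValRat.of_int, padicValInt.eq_zero_of_not_dvd hpn]
  have h4 : padicValRat p 4 = 0 := by
    have : ((4:ℤ) : ℚ) = 4 := by norm_num
    rw [← this, padicValRat.of_int, padicValInt.eq_zero_of_not_dvd]
    · simp
    · intro hdvd4
      have hnat : p ∣ 4 := by exact_mod_cast hdvd4
      have := hp.two_le
      have hle : p ≤ 4 := Nat.le_of_dvd (by norm_num) hnat
      interval_cases p
      all_goals first
        | exact hp2 rfl
        | exact hp3 rfl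
        | exact absurd hp (by decide)
        | exact absurd hnat (by decide)
  rw [h4]
  simp
end

section
/- The set of positive integers t for which t^2 + 1 is squarefree has positive lower density; in particular, there are infinitely many positive integers t such that t^2 + 1 is squarefree. -/
/-!
If `t ^ 2 + 1` is not squarefree, then `p ^ 2 ∣ t ^ 2 + 1` for a prime `p ≤ t`, and `p ≡ 1 mod 4`
since `-1` is a square mod `p` while `4 ∤ t ^ 2 + 1`. For odd `p` the congruence `x ^ 2 = -1` has at
most two solutions mod `p ^ 2`, so `p ^ 2 ∣ t ^ 2 + 1` for at most `2 (N / p ^ 2 + 1)` of the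
`t ∈ [1, N]`. Summing over the primes `p ≡ 1 mod 4` up to `N`, and using `∑ p⁻² ≤ 1/8` over them
(the terms `5, 13, 17` plus a tail `≤ 2/29`), at most `3N/4 + 2` of the `t ∈ [1, N]` have
`t ^ 2 + 1` not squarefree.
-/

open Finset

theorem card_filter_Icc_natCast_eq_le (m N : ℕ) (x : ZMod m) :
    #{t ∈ Icc 1 N | ((t : ℕ) : ZMod m) = x} ≤ N / m + 1 := by
  calc #{t ∈ Icc 1 N | ((t : ℕ) : ZMod m) = x} ≤ #(range (N / m + 1)) := by
        refine card_le_card_of_injOn (· / m) (fun t ht => ?_) (fun s hs t ht hst => ?_)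
        · simp only [coe_filter, Set.mem_ofPred_eq] at ht
          simpa [Nat.lt_succ_iff] using Nat.div_le_div_right (c := m) (mem_Icc.1 ht.1).2
        · simp only [coe_filter, Set.mem_ofPred_eq] at hs ht
          have hmod : s % m = t % m := (ZMod.natCast_eq_natCast_iff' s t m).1 (hs.2.trans ht.2.symm)
          rw [← Nat.div_add_mod s m, ← Nat.div_add_mod t m, hmod]
          exact congrArg (m * · + t % m) hst
    _ = N / m + 1 := card_range _

theorem card_filter_Icc_natCast_mem_le (m N : ℕ) (S : Finset (ZMod m)) :
    #{t ∈ Icc 1 N | ((t : ℕ) : ZMod m) ∈ S} ≤ #S * (N / m + 1) := by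
  rw [mul_comm]
  refine card_le_mul_card_image_of_maps_to (fun t ht => (mem_filter.1 ht).2) _ fun x _ => ?_
  refine (card_le_card fun t ht => ?_).trans (card_filter_Icc_natCast_eq_le m N x)
  simp only [mem_filter] at ht ⊢
  exact ⟨ht.1.1, ht.2⟩

theorem Int.pow_dvd_sub_or_pow_dvd_add_of_sq_sub_sq {p a b : ℤ} (hp : Prime p) (hp2 : ¬p ∣ 2)
    (ha : ¬p ∣ a) (k : ℕ) (h : p ^ k ∣ a ^ 2 - b ^ 2) : p ^ k ∣ a - b ∨ p ^ k ∣ a + b := by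
  have hfactor : a ^ 2 - b ^ 2 = (a - b) * (a + b) := by ring
  rw [hfactor] at h
  by_cases hsub : p ∣ a - b
  · have hadd : ¬p ∣ a + b := fun hadd => by
      have h2a : p ∣ 2 * a := by simpa [two_mul, add_add_sub_cancel] using dvd_add hsub hadd
      exact (hp.dvd_or_dvd h2a).elim hp2 ha
    exact .inl (((hp.coprime_iff_not_dvd.2 hadd).pow_left).dvd_of_dvd_mul_right h)
  · exact .inr (((hp.coprime_iff_not_dvd.2 hsub).pow_left).dvd_of_dvd_mul_left h)

theorem ZMod.eq_or_eq_neg_of_sq_eq_neg_one {p : ℕ} (hp : p.Prime) (hp2 : p ≠ 2) {k : ℕ}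
    {x y : ZMod (p ^ k)} (hx : x ^ 2 = -1) (hy : y ^ 2 = -1) : x = y ∨ x = -y := by
  rcases k.eq_zero_or_pos with rfl | hk
  · exact .inl (Subsingleton.elim (α := ZMod 1) x y)
  obtain ⟨a, rfl⟩ := ZMod.intCast_surjective x
  obtain ⟨b, rfl⟩ := ZMod.intCast_surjective y
  have hpz : Prime (p : ℤ) := Nat.prime_iff_prime_int.1 hp
  have hp2z : ¬(p : ℤ) ∣ 2 := by
    exact_mod_cast fun h => hp2 ((Nat.prime_dvd_prime_iff_eq hp Nat.prime_two).1 h)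
  have hsq : ((p ^ k : ℕ) : ℤ) ∣ a ^ 2 - b ^ 2 := by
    rw [← ZMod.intCast_zmod_eq_zero_iff_dvd]
    push_cast
    rw [hx, hy, sub_self]
  have ha : ¬(p : ℤ) ∣ a := fun ha => by
    have hdvd : ((p ^ k : ℕ) : ℤ) ∣ a ^ 2 + 1 := by
      rw [← ZMod.intCast_zmod_eq_zero_iff_dvd]
      push_cast
      rw [hx, neg_add_cancel]
    have h1 : (p : ℤ) ∣ a ^ 2 + 1 := (dvd_pow_self (p : ℤ) hk.ne').trans (by exact_mod_cast hdvd)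
    exact hpz.not_isUnit (isUnit_of_dvd_one ((dvd_add_right (ha.pow two_ne_zero)).1 h1))
  push_cast at hsq
  rw [← Int.cast_neg, ZMod.intCast_eq_intCast_iff_dvd_sub, ZMod.intCast_eq_intCast_iff_dvd_sub]
  push_cast
  rcases Int.pow_dvd_sub_or_pow_dvd_add_of_sq_sub_sq hpz hp2z ha k hsq with h | h
  · exact .inl (by rw [← neg_sub]; exact h.neg_right)
  · exact .inr (by rw [show -b - a = -(a + b) by ring]; exact h.neg_right)

theorem card_filter_Icc_pow_dvd_sq_add_one_le {p : ℕ} (hp : p.Prime) (hp2 : p ≠ 2) (k N : ℕ) :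
    #{t ∈ Icc 1 N | p ^ k ∣ t ^ 2 + 1} ≤ 2 * (N / p ^ k + 1) := by
  have hroot {t : ℕ} : p ^ k ∣ t ^ 2 + 1 ↔ ((t : ℕ) : ZMod (p ^ k)) ^ 2 = -1 := by
    rw [← ZMod.natCast_eq_zero_iff, eq_neg_iff_add_eq_zero]
    push_cast
    rfl
  rcases (filter (fun t => p ^ k ∣ t ^ 2 + 1) (Icc 1 N)).eq_empty_or_nonempty with he | ⟨t₀, ht₀⟩
  · simp [he]
  set x₀ : ZMod (p ^ k) := Nat.cast t₀
  have hx₀ : x₀ ^ 2 = -1 := hroot.1 (mem_filter.1 ht₀).2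
  calc #{t ∈ Icc 1 N | p ^ k ∣ t ^ 2 + 1}
      ≤ #{t ∈ Icc 1 N | ((t : ℕ) : ZMod (p ^ k)) ∈ ({x₀, -x₀} : Finset _)} := by
        refine card_le_card (monotone_filter_right _ fun t _ ht => ?_)
        rcases ZMod.eq_or_eq_neg_of_sq_eq_neg_one hp hp2 (hroot.1 ht) hx₀ with h | h <;> simp [h]
    _ ≤ #({x₀, -x₀} : Finset _) * (N / p ^ k + 1) := card_filter_Icc_natCast_mem_le _ _ _
    _ ≤ 2 * (N / p ^ k + 1) := Nat.mul_le_mul_right _ card_le_two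

theorem Nat.Prime.mod_four_eq_one_of_sq_dvd_sq_add_one {p t : ℕ} (hp : p.Prime)
    (h : p ^ 2 ∣ t ^ 2 + 1) : p % 4 = 1 := by
  have hp2 : p ≠ 2 := by
    rintro rfl
    have h4 : ((t ^ 2 + 1 : ℕ) : ZMod 4) = 0 := (ZMod.natCast_eq_zero_iff _ _).2 h
    push_cast at h4
    generalize (t : ZMod 4) = x at h4
    revert x; decide
  have := Fact.mk hp
  have hp3 : p % 4 ≠ 3 := by
    refine ZMod.mod_four_ne_three_of_sq_eq_neg_one (y := (t : ZMod p)) ?_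
    have hz : ((t ^ 2 + 1 : ℕ) : ZMod p) = 0 :=
      (ZMod.natCast_eq_zero_iff _ _).2 ((dvd_pow_self p two_ne_zero).trans h)
    push_cast at hz
    exact eq_neg_of_add_eq_zero_left hz
  have := Nat.odd_iff.1 (hp.odd_of_ne_two hp2)
  omega

theorem exists_prime_mod_four_eq_one_of_not_squarefree_sq_add_one {t : ℕ}
    (h : ¬Squarefree (t ^ 2 + 1)) : ∃ p, p.Prime ∧ p % 4 = 1 ∧ p ≤ t ∧ p ^ 2 ∣ t ^ 2 + 1 := by
  obtain ⟨p, hp, hdvd⟩ := by simpa [Nat.squarefree_iff_prime_squarefree] using h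
  rw [← sq] at hdvd
  refine ⟨p, hp, hp.mod_four_eq_one_of_sq_dvd_sq_add_one hdvd, ?_, hdvd⟩
  have hle := Nat.le_of_dvd (by positivity) hdvd
  nlinarith [hp.two_le]

theorem card_filter_Icc_not_squarefree_sq_add_one_le (N : ℕ) :
    #{t ∈ Icc 1 N | ¬Squarefree (t ^ 2 + 1)} ≤
      ∑ p ∈ Icc 1 N with p.Prime ∧ p % 4 = 1, #{t ∈ Icc 1 N | p ^ 2 ∣ t ^ 2 + 1} := by
  refine (card_le_card fun t ht => ?_).trans card_biUnion_le
  obtain ⟨ht, hns⟩ := mem_filter.1 ht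
  obtain ⟨p, hp, hp4, hpt, hdvd⟩ := exists_prime_mod_four_eq_one_of_not_squarefree_sq_add_one hns
  have hpN : p ∈ Icc 1 N := mem_Icc.2 ⟨hp.one_le, hpt.trans (mem_Icc.1 ht).2⟩
  exact mem_biUnion.2 ⟨p, mem_filter.2 ⟨hpN, hp, hp4⟩, mem_filter.2 ⟨ht, hdvd⟩⟩

theorem sum_inv_sq_le_of_prime_mod_four_eq_one (s : Finset ℕ)
    (hs : ∀ p ∈ s, p.Prime ∧ p % 4 = 1) : ∑ p ∈ s, ((p : ℝ) ^ 2)⁻¹ ≤ 1 / 8 := by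
  have hsub : s ⊆ {5, 13, 17} ∪ Ioo 28 (s.sup id + 1) := by
    intro p hp
    obtain ⟨hpp, hp4⟩ := hs p hp
    rcases lt_or_ge p 29 with hlt | hge
    · refine mem_union_left _ ?_
      interval_cases p <;> first | decide | omega | norm_num at hpp
    · exact mem_union_right _ (mem_Ioo.2 ⟨hge, Nat.lt_succ_of_le (le_sup (f := id) hp)⟩)
  calc ∑ p ∈ s, ((p : ℝ) ^ 2)⁻¹
      ≤ ∑ p ∈ {5, 13, 17} ∪ Ioo 28 (s.sup id + 1), ((p : ℝ) ^ 2)⁻¹ :=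
        sum_le_sum_of_subset_of_nonneg hsub fun _ _ _ => by positivity
    _ = ∑ p ∈ ({5, 13, 17} : Finset ℕ), ((p : ℝ) ^ 2)⁻¹ +
          ∑ p ∈ Ioo 28 (s.sup id + 1), ((p : ℝ) ^ 2)⁻¹ :=
        sum_union (by simp [disjoint_left])
    _ ≤ (1 / 25 + 1 / 169 + 1 / 289) + 2 / (28 + 1) := by
        gcongr
        · norm_num
        · exact sum_Ioo_inv_sq_le _ _
    _ ≤ 1 / 8 := by norm_num

theorem card_filter_Icc_not_squarefree_sq_add_one_le_real (N : ℕ) :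
    (#{t ∈ Icc 1 N | ¬Squarefree (t ^ 2 + 1)} : ℝ) ≤ 3 / 4 * N + 2 := by
  set P := {p ∈ Icc 1 N | p.Prime ∧ p % 4 = 1}
  have hP : (#P : ℝ) ≤ N / 4 + 1 := by
    have hcard : #P ≤ N / 4 + 1 := by
      refine (card_le_card (monotone_filter_right _ fun p _ hp => ?_)).trans
        (card_filter_Icc_natCast_eq_le 4 N 1)
      exact (ZMod.natCast_eq_natCast_iff' p 1 4).2 hp.2
    calc (#P : ℝ) ≤ ((N / 4 : ℕ) : ℝ) + 1 := by exact_mod_cast hcard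
      _ ≤ N / 4 + 1 := by gcongr; exact Nat.cast_div_le
  have hterm : ∀ p ∈ P,
      (#{t ∈ Icc 1 N | p ^ 2 ∣ t ^ 2 + 1} : ℝ) ≤ 2 * N * ((p : ℝ) ^ 2)⁻¹ + 2 := by
    intro p hp
    obtain ⟨hpp, hp4⟩ := (mem_filter.1 hp).2
    have hcard := card_filter_Icc_pow_dvd_sq_add_one_le hpp (by omega) 2 N
    calc (#{t ∈ Icc 1 N | p ^ 2 ∣ t ^ 2 + 1} : ℝ) ≤ 2 * (((N / p ^ 2 : ℕ) : ℝ) + 1) := by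
          exact_mod_cast hcard
      _ ≤ 2 * (N / (p : ℝ) ^ 2 + 1) := by gcongr; exact_mod_cast Nat.cast_div_le
      _ = 2 * N * ((p : ℝ) ^ 2)⁻¹ + 2 := by ring
  calc (#{t ∈ Icc 1 N | ¬Squarefree (t ^ 2 + 1)} : ℝ)
      ≤ ∑ p ∈ P, (#{t ∈ Icc 1 N | p ^ 2 ∣ t ^ 2 + 1} : ℝ) := by
        exact_mod_cast card_filter_Icc_not_squarefree_sq_add_one_le N
    _ ≤ ∑ p ∈ P, (2 * N * ((p : ℝ) ^ 2)⁻¹ + 2) := sum_le_sum hterm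
    _ = 2 * N * ∑ p ∈ P, ((p : ℝ) ^ 2)⁻¹ + 2 * #P := by
        rw [sum_add_distrib, ← mul_sum, sum_const, nsmul_eq_mul]
        ring
    _ ≤ 2 * N * (1 / 8) + 2 * (N / 4 + 1) := by
        gcongr
        exact sum_inv_sq_le_of_prime_mod_four_eq_one P fun p hp => (mem_filter.1 hp).2
    _ = 3 / 4 * N + 2 := by ring

theorem card_filter_Icc_squarefree_sq_add_one_ge (N : ℕ) :
    1 / 4 * (N : ℝ) - 2 ≤ #{t ∈ Icc 1 N | Squarefree (t ^ 2 + 1)} := by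
  have hsplit := card_filter_add_card_filter_not (s := Icc 1 N) (fun t => Squarefree (t ^ 2 + 1))
  rw [Nat.card_Icc, Nat.add_sub_cancel] at hsplit
  have hsplitR : (#{t ∈ Icc 1 N | Squarefree (t ^ 2 + 1)} : ℝ) +
      #{t ∈ Icc 1 N | ¬Squarefree (t ^ 2 + 1)} = N := by exact_mod_cast hsplit
  linarith [card_filter_Icc_not_squarefree_sq_add_one_le_real N]

section Density

open Filter Topology

variable {P : ℕ → Prop} [DecidablePred P] {c d : ℝ}

theorem le_liminf_card_filter_Icc_div (h : ∀ N : ℕ, c * N - d ≤ #{t ∈ Icc 1 N | P t}) :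
    c ≤ liminf (fun N : ℕ => (#{t ∈ Icc 1 N | P t} : ℝ) / N) atTop := by
  have hlim : Tendsto (fun N : ℕ => c - d / N) atTop (𝓝 c) := by
    simpa using tendsto_const_nhds.sub (tendsto_const_div_atTop_nhds_zero_nat d)
  have hle : ∀ᶠ N : ℕ in atTop, c - d / N ≤ (#{t ∈ Icc 1 N | P t} : ℝ) / N := by
    filter_upwards [eventually_ge_atTop 1] with N hN
    have hNpos : (0 : ℝ) < N := by exact_mod_cast hN
    rw [le_div_iff₀ hNpos, sub_mul, div_mul_cancel₀ _ hNpos.ne']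
    exact h N
  have hbdd : IsBoundedUnder (· ≤ ·) atTop fun N : ℕ => (#{t ∈ Icc 1 N | P t} : ℝ) / N := by
    refine ⟨1, eventually_map.2 (Eventually.of_forall fun N => div_le_one_of_le₀ ?_ N.cast_nonneg)⟩
    exact_mod_cast (card_filter_le _ _).trans (by simp)
  calc c = liminf (fun N : ℕ => c - d / N) atTop := hlim.liminf_eq.symm
    _ ≤ _ := liminf_le_liminf hle hlim.isBoundedUnder_ge hbdd.isCoboundedUnder_ge

theorem infinite_of_le_card_filter_Icc (hc : 0 < c)
    (h : ∀ N : ℕ, c * N - d ≤ #{t ∈ Icc 1 N | P t}) : {t : ℕ | 0 < t ∧ P t}.Infinite := by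
  intro hfin
  obtain ⟨N, hN⟩ := exists_nat_gt ((#hfin.toFinset + d) / c)
  have hsub : #{t ∈ Icc 1 N | P t} ≤ #hfin.toFinset := card_le_card fun t ht => by
    simp only [mem_filter, mem_Icc] at ht
    simpa using ⟨ht.1.1, ht.2⟩
  have hsubR : (#{t ∈ Icc 1 N | P t} : ℝ) ≤ #hfin.toFinset := by exact_mod_cast hsub
  rw [div_lt_iff₀ hc] at hN
  linarith [h N]

end Density

theorem squarefree_sq_add_one_positive_density :
    (∃ c : ℝ, 0 < c ∧
      c ≤ Filter.liminf
        (fun N : ℕ =>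
          (((Finset.Icc 1 N).filter (fun t => Squarefree (t ^ 2 + 1))).card : ℝ) / N)
        Filter.atTop) ∧
    {t : ℕ | 0 < t ∧ Squarefree (t ^ 2 + 1)}.Infinite :=
  ⟨⟨1 / 4, by norm_num, le_liminf_card_filter_Icc_div card_filter_Icc_squarefree_sq_add_one_ge⟩,
    infinite_of_le_card_filter_Icc (by norm_num : (0 : ℝ) < 1 / 4) card_filter_Icc_squarefree_sq_add_one_ge⟩
end
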